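/- Integration error estimate: with X compact, ρ a finite strictly positive strongly continuous Borel measure on X, w_i = ρ(V_i) the Voronoi weights of the points x₁,…,x_m with fill distance h_x, and λ > 0, the functions f_{x,λ} = (S*D_wS + λI)^{-1}S*D_w S f* and f_λ = (L_K + λI)^{-1} L_K f* satisfy ‖f_{x,λ} − f_λ‖_{L^∞(X)} ≤ (C/λ) κ ‖f* − f_λ‖_K · h_x · ρ(X), where C depends on a Lipschitz bound for functions of the form u(y) K(·,y) with u ∈ H_K. -/

import Mathlib

/-!
With `u = f* − f_λ`, the defining equation of `f_λ` says that `λ f_λ − ∫ u(y) K(·,y) dρ(y)` is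
invisible to point evaluations, hence is killed by `S` and only rescaled by the discrete
resolvent. This leaves `f_{x,λ} − f_λ = (S* D_w S + λ)⁻¹ (S* D_w S u − ∫ u(y) K(·,y) dρ(y))` up to
that invisible vector. The difference inside is the error of the Voronoi quadrature
`∑ᵢ wᵢ u(xᵢ) K(·,xᵢ)` of a Lipschitz `H_K`-valued integrand, at most `C ‖u‖ h_x ρ(X)`, the
resolvent has norm at most `1/λ` because `S* D_w S` is positive, and evaluation at a point has
norm at most `κ`.
-/

open MeasureTheory ContinuousLinearMap Function
open scoped RealInnerProductSpace

section Voronoi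

variable {X ι : Type*} [PseudoMetricSpace X] {xp : ι → X}

variable (xp) in
def voronoiCell (i : ι) : Set X :=
  {y | ∀ j, j ≠ i → dist (xp i) y < dist (xp j) y}

theorem isOpen_voronoiCell [Finite ι] (i : ι) : IsOpen (voronoiCell xp i) := by
  have : voronoiCell xp i = ⋂ j, ⋂ (_ : j ≠ i), {y | dist (xp i) y < dist (xp j) y} := by
    ext y
    simp [voronoiCell]
  rw [this]
  exact isOpen_iInter_of_finite fun j => isOpen_iInter_of_finite fun _ =>
    isOpen_lt (continuous_const.dist continuous_id) (continuous_const.dist continuous_id)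

theorem pairwise_disjoint_voronoiCell : Pairwise (Disjoint on voronoiCell xp) :=
  fun i j hij => Set.disjoint_left.mpr fun _ hyi hyj => lt_asymm (hyi j hij.symm) (hyj i hij)

theorem dist_le_of_mem_voronoiCell {h : ℝ} (hfill : ∀ y, ∃ i, dist (xp i) y ≤ h) {i : ι}
    {y : X} (hy : y ∈ voronoiCell xp i) : dist (xp i) y ≤ h := by
  obtain ⟨j, hj⟩ := hfill y
  rcases eq_or_ne j i with rfl | hji
  · exact hj
  · exact (hy j hji).le.trans hj

end Voronoi

section AeCover

variable {X E ι : Type*} [MeasurableSpace X] {ρ : Measure X} [Fintype ι] {V : ι → Set X}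

theorem sum_measureReal_eq_of_ae_cover [IsFiniteMeasure ρ] (hVm : ∀ i, MeasurableSet (V i))
    (hVd : Pairwise (Disjoint on V)) (hcover : (⋃ i, V i) =ᵐ[ρ] (Set.univ : Set X)) :
    ∑ i, ρ.real (V i) = ρ.real Set.univ := by
  rw [← measureReal_iUnion_fintype hVd hVm, measureReal_congr hcover]

theorem integral_eq_sum_setIntegral_of_ae_cover [NormedAddCommGroup E] [NormedSpace ℝ E]
    {F : X → E} (hVm : ∀ i, MeasurableSet (V i)) (hVd : Pairwise (Disjoint on V))
    (hcover : (⋃ i, V i) =ᵐ[ρ] (Set.univ : Set X)) (hF : Integrable F ρ) :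
    ∫ y, F y ∂ρ = ∑ i, ∫ y in V i, F y ∂ρ := by
  rw [← integral_iUnion_fintype hVm hVd fun _ => hF.integrableOn, setIntegral_congr_set hcover,
    setIntegral_univ]

end AeCover

section Quadrature

variable {X E ι : Type*} [PseudoMetricSpace X] [MeasurableSpace X] {ρ : Measure X}
  [IsFiniteMeasure ρ] [NormedAddCommGroup E] [NormedSpace ℝ E] [CompleteSpace E]
  {F : X → E} {C : NNReal} {h : ℝ}

theorem norm_measureReal_smul_sub_setIntegral_le (hF : LipschitzWith C F) {s : Set X}
    (hFs : IntegrableOn F s ρ) {x : X} (hs : ∀ y ∈ s, dist x y ≤ h) :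
    ‖ρ.real s • F x - ∫ y in s, F y ∂ρ‖ ≤ C * h * ρ.real s := by
  rw [← setIntegral_const, ← integral_sub (integrableOn_const (measure_ne_top ρ s)).integrable hFs]
  refine norm_setIntegral_le_of_norm_le_const (measure_lt_top ρ s) fun y hy => ?_
  rw [← dist_eq_norm]
  exact (hF.dist_le_mul x y).trans (mul_le_mul_of_nonneg_left (hs y hy) C.2)

theorem norm_sum_measureReal_smul_sub_integral_le [Fintype ι] (xp : ι → X) {V : ι → Set X}
    (hVm : ∀ i, MeasurableSet (V i)) (hVd : Pairwise (Disjoint on V))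
    (hcover : (⋃ i, V i) =ᵐ[ρ] (Set.univ : Set X)) (hV : ∀ i, ∀ y ∈ V i, dist (xp i) y ≤ h)
    (hF : LipschitzWith C F) (hFi : Integrable F ρ) :
    ‖∑ i, ρ.real (V i) • F (xp i) - ∫ y, F y ∂ρ‖ ≤ C * h * ρ.real Set.univ := by
  rw [integral_eq_sum_setIntegral_of_ae_cover hVm hVd hcover hFi,
    ← sum_measureReal_eq_of_ae_cover hVm hVd hcover, Finset.mul_sum, ← Finset.sum_sub_distrib]
  exact (norm_sum_le _ _).trans <| Finset.sum_le_sum fun i _ =>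
    norm_measureReal_smul_sub_setIntegral_le hF hFi.integrableOn (hV i)

theorem norm_sum_voronoiCell_smul_sub_integral_le [OpensMeasurableSpace X] [Fintype ι]
    (xp : ι → X) (hfill : ∀ y, ∃ i, dist (xp i) y ≤ h)
    (hcover : ρ (⋃ i, voronoiCell xp i)ᶜ = 0) (hF : LipschitzWith C F) (hFi : Integrable F ρ) :
    ‖∑ i, ρ.real (voronoiCell xp i) • F (xp i) - ∫ y, F y ∂ρ‖ ≤ C * h * ρ.real Set.univ :=
  norm_sum_measureReal_smul_sub_integral_le xp (fun i => (isOpen_voronoiCell i).measurableSet)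
    pairwise_disjoint_voronoiCell (ae_eq_univ.mpr hcover)
    (fun _ _ => dist_le_of_mem_voronoiCell hfill) hF hFi

end Quadrature

section Operators

variable {H : Type*} [NormedAddCommGroup H] [InnerProductSpace ℝ H]

theorem norm_le_of_inner_self_le {v : H} {κ : ℝ} (hκ0 : 0 ≤ κ) (hv : ⟪v, v⟫ ≤ κ ^ 2) :
    ‖v‖ ≤ κ := by
  rw [real_inner_self_eq_norm_sq] at hv
  exact (sq_le_sq₀ (norm_nonneg v) hκ0).mp hv

theorem EuclideanSpace.isPositive_of_apply_eq_mul {ι : Type*} [Fintype ι]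
    {D : EuclideanSpace ℝ ι →L[ℝ] EuclideanSpace ℝ ι} {w : ι → ℝ} (hw : ∀ i, 0 ≤ w i)
    (hD : ∀ c i, D c i = w i * c i) : D.IsPositive := by
  refine ⟨fun c d => ?_, fun c => ?_⟩
  · simp only [coe_coe, PiLp.inner_apply, hD, RCLike.inner_apply, conj_trivial]
    exact Finset.sum_congr rfl fun i _ => by ring
  · simp only [reApplyInnerSelf, PiLp.inner_apply, hD, RCLike.inner_apply, conj_trivial,
      RCLike.re_to_real]
    exact Finset.sum_nonneg fun i _ => by nlinarith [hw i, mul_self_nonneg (c i)]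

theorem adjoint_apply_eq_sum_smul [CompleteSpace H] {ι : Type*} [Fintype ι]
    {S : H →L[ℝ] EuclideanSpace ℝ ι} {k : ι → H} (hS : ∀ f i, S f i = ⟪k i, f⟫)
    (c : EuclideanSpace ℝ ι) : adjoint S c = ∑ i, c i • k i := by
  refine ext_inner_right ℝ fun f => ?_
  rw [adjoint_inner_left, sum_inner, PiLp.inner_apply]
  simp only [real_inner_smul_left, hS, RCLike.inner_apply, conj_trivial, mul_comm]

namespace ContinuousLinearMap.IsPositive

variable {A : H →L[ℝ] H}

theorem mul_norm_le_norm_add_smul (hA : A.IsPositive) (lam : ℝ) (f : H) :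
    lam * ‖f‖ ≤ ‖A f + lam • f‖ := by
  have key : lam * ‖f‖ * ‖f‖ ≤ ‖A f + lam • f‖ * ‖f‖ := calc
    lam * ‖f‖ * ‖f‖ ≤ ⟪A f, f⟫ + lam * ‖f‖ ^ 2 := by
      nlinarith [hA.inner_nonneg_left f]
    _ = ⟪A f + lam • f, f⟫ := by
      rw [inner_add_left, real_inner_smul_left, real_inner_self_eq_norm_sq]
    _ ≤ ‖A f + lam • f‖ * ‖f‖ := real_inner_le_norm _ _
  rcases (norm_nonneg f).eq_or_lt with hf | hf
  · rw [← hf, mul_zero]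
    exact norm_nonneg _
  · exact le_of_mul_le_mul_right key hf

theorem norm_apply_le_of_comp_eq_id (hA : A.IsPositive) {lam : ℝ} (hlam : 0 < lam) {B : H →L[ℝ] H}
    (hB : (A + lam • ContinuousLinearMap.id ℝ H).comp B = ContinuousLinearMap.id ℝ H) (v : H) :
    ‖B v‖ ≤ ‖v‖ / lam := by
  have hv : A (B v) + lam • B v = v := by simpa using DFunLike.congr_fun hB v
  rw [le_div_iff₀ hlam, mul_comm]
  simpa only [hv] using hA.mul_norm_le_norm_add_smul lam (B v)

end ContinuousLinearMap.IsPositive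

theorem apply_sub_eq_of_comp_add_smul_eq_id {A B : H →L[ℝ] H} {lam : ℝ} (hlam : lam ≠ 0)
    (hB : B.comp (A + lam • ContinuousLinearMap.id ℝ H) = ContinuousLinearMap.id ℝ H)
    {f g L : H} (hA : A (lam • g - L) = 0) :
    B (A f) - g = B (A (f - g) - L) - lam⁻¹ • (lam • g - L) := by
  have hBA : ∀ v, B (A v + lam • v) = v := fun v => by simpa using DFunLike.congr_fun hB v
  have hBe : B (lam • g - L) = lam⁻¹ • (lam • g - L) := by
    rw [eq_inv_smul_iff₀ hlam, ← map_smul]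
    simpa only [hA, zero_add] using hBA (lam • g - L)
  calc B (A f) - g = B (A f - (A g + lam • g)) := by rw [map_sub, hBA]
    _ = B (A (f - g) - L - (lam • g - L)) := by congr 1; rw [map_sub]; abel
    _ = _ := by rw [map_sub, hBe]

end Operators

section Kernel

variable {X H : Type*} [TopologicalSpace X] [CompactSpace X] [MeasurableSpace X]
  [OpensMeasurableSpace X] {ρ : Measure X} [IsFiniteMeasure ρ]
  [NormedAddCommGroup H] [InnerProductSpace ℝ H] [CompleteSpace H] {k : X → H}

theorem inner_smul_sub_integral_eq_zero (hk : ∀ u : H, Continuous fun x => ⟪k x, u⟫)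
    {lam : ℝ} {f g : H}
    (hg : ∀ x, lam * ⟪k x, g⟫ + ∫ y, ⟪k x, k y⟫ * ⟪k y, g⟫ ∂ρ = ∫ y, ⟪k x, k y⟫ * ⟪k y, f⟫ ∂ρ)
    (hF : Integrable (fun y => ⟪k y, f - g⟫ • k y) ρ) (x : X) :
    ⟪k x, lam • g - ∫ y, ⟪k y, f - g⟫ • k y ∂ρ⟫ = 0 := by
  have hint : ∀ u : H, Integrable (fun y => ⟪k x, k y⟫ * ⟪k y, u⟫) ρ := fun u =>
    (((hk (k x)).congr fun y => real_inner_comm _ _).mul (hk u)).integrable_of_hasCompactSupport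
      (.of_compactSpace _)
  have hsplit : ∫ y, ⟪k x, ⟪k y, f - g⟫ • k y⟫ ∂ρ =
      ∫ y, ⟪k x, k y⟫ * ⟪k y, f⟫ ∂ρ - ∫ y, ⟪k x, k y⟫ * ⟪k y, g⟫ ∂ρ := by
    rw [← integral_sub (hint f) (hint g)]
    simp only [real_inner_smul_right, inner_sub_right]
    congr 1 with y
    ring
  rw [inner_sub_right, real_inner_smul_right, ← integral_inner hF, hsplit, ← hg x]
  ring

end Kernel

theorem integration_error_estimate_general {X : Type*}
    [MetricSpace X] [CompactSpace X] [MeasurableSpace X] [BorelSpace X]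
    (ρ : Measure X) [IsFiniteMeasure ρ]
    {H : Type*} [NormedAddCommGroup H] [InnerProductSpace ℝ H] [CompleteSpace H]
    (toFun : H → X → ℝ) (k : X → H) (K : X → X → ℝ) (κ : ℝ)
    (hK : ∀ x y : X, K x y = ⟪k x, k y⟫)
    (hrepro : ∀ (f : H) (x : X), ⟪k x, f⟫ = toFun f x)
    (hκ : ∀ x : X, K x x ≤ κ ^ 2) (hκ0 : 0 ≤ κ)
    (hcont : ∀ u : H, Continuous (toFun u))
    {m : ℕ} (xp : Fin m → X)
    -- Voronoi cells, their weights, and strong continuity of `ρ` across cell boundaries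
    (V : Fin m → Set X)
    (hV : ∀ i, V i = {y : X | ∀ j, j ≠ i → dist (xp i) y < dist (xp j) y})
    (hbd : ρ (Set.univ \ ⋃ i, V i) = 0)
    (w : Fin m → ℝ) (hw : ∀ i, w i = (ρ (V i)).toReal)
    -- fill distance
    (h : ℝ) (hfill : ∀ y : X, ∃ i, dist (xp i) y ≤ h)
    -- Lipschitz bound for `y ↦ u(y) K(·,y)`
    (C0 : ℝ) (hC0 : 0 ≤ C0)
    (hLip : ∀ u : H, LipschitzWith (Real.toNNReal (C0 * ‖u‖))
      (fun y : X => toFun u y • k y))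
    (lam : ℝ) (hlam : 0 < lam)
    (fstar : H)
    -- the sampling operator, the weight operator, and `(S*D_wS + λI)⁻¹`
    (S : H →L[ℝ] EuclideanSpace ℝ (Fin m))
    (hS : ∀ (f : H) (i : Fin m), S f i = toFun f (xp i))
    (Dw : EuclideanSpace ℝ (Fin m) →L[ℝ] EuclideanSpace ℝ (Fin m))
    (hDw : ∀ (c : EuclideanSpace ℝ (Fin m)) (i : Fin m), Dw c i = w i * c i)
    (B : H →L[ℝ] H)
    (hB₁ : (((ContinuousLinearMap.adjoint S).comp (Dw.comp S)) +
        lam • ContinuousLinearMap.id ℝ H).comp B = ContinuousLinearMap.id ℝ H)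
    (hB₂ : B.comp (((ContinuousLinearMap.adjoint S).comp (Dw.comp S)) +
        lam • ContinuousLinearMap.id ℝ H) = ContinuousLinearMap.id ℝ H)
    -- `f_λ = (L_K + λI)⁻¹ L_K f*`
    (flam : H)
    (hflam : ∀ t : X, lam * toFun flam t + (∫ y, K t y * toFun flam y ∂ρ) =
      ∫ y, K t y * toFun fstar y ∂ρ) :
    ∀ t : X,
      |toFun (B ((ContinuousLinearMap.adjoint S) (Dw (S fstar)))) t - toFun flam t| ≤
        (C0 / lam) * κ * ‖fstar - flam‖ * h * (ρ Set.univ).toReal := by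
  intro t
  obtain rfl : V = voronoiCell xp := funext hV
  have hkcont : ∀ u : H, Continuous fun x => ⟪k x, u⟫ := by simpa only [hrepro] using hcont
  simp only [← hrepro] at hS hLip hflam ⊢
  simp only [hK] at hκ hflam
  set A := (adjoint S).comp (Dw.comp S)
  set u := fstar - flam
  set L : H := ∫ y, ⟪k y, u⟫ • k y ∂ρ
  have hA : A.IsPositive := (EuclideanSpace.isPositive_of_apply_eq_mul
    (fun i => hw i ▸ ENNReal.toReal_nonneg) hDw).adjoint_conj S
  have hFi : Integrable (fun y => ⟪k y, u⟫ • k y) ρ :=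
    (hLip u).continuous.integrable_of_hasCompactSupport (.of_compactSpace _)
  have hquad : ‖A u - L‖ ≤ C0 * ‖u‖ * h * ρ.real Set.univ := by
    have hAu : A u = ∑ i, ρ.real (voronoiCell xp i) • (⟪k (xp i), u⟫ • k (xp i)) := by
      simp [A, adjoint_apply_eq_sum_smul (k := fun i => k (xp i)) hS, hDw, hS, hw, mul_smul,
        measureReal_def]
    have := norm_sum_voronoiCell_smul_sub_integral_le xp hfill
      (by rwa [Set.compl_eq_univ_sdiff]) (hLip u) hFi
    rwa [Real.coe_toNNReal _ (mul_nonneg hC0 (norm_nonneg u)), ← hAu] at this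
  have he := inner_smul_sub_integral_eq_zero hkcont hflam hFi
  have hSe : S (lam • flam - L) = 0 := by ext i; rw [hS, he]; rfl
  have hdecomp : B (adjoint S (Dw (S fstar))) - flam = B (A u - L) - lam⁻¹ • (lam • flam - L) :=
    apply_sub_eq_of_comp_add_smul_eq_id hlam.ne' hB₂ (by simp [A, hSe])
  rw [← inner_sub_right, hdecomp, inner_sub_right, real_inner_smul_right, he, mul_zero, sub_zero]
  calc |⟪k t, B (A u - L)⟫| ≤ ‖k t‖ * ‖B (A u - L)‖ := abs_real_inner_le_norm _ _
    _ ≤ κ * (C0 * ‖u‖ * h * ρ.real Set.univ / lam) :=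
      mul_le_mul (norm_le_of_inner_self_le hκ0 (hκ t))
        ((hA.norm_apply_le_of_comp_eq_id hlam hB₁ _).trans
          (div_le_div_of_nonneg_right hquad hlam.le)) (norm_nonneg _) hκ0
    _ = _ := by
      rw [measureReal_def]
      ring

/-- Integration error estimate. With `X` compact, `ρ` a finite strictly
positive strongly continuous Borel measure, Voronoi weights `wᵢ = ρ(Vᵢ)` for points with
fill distance `h_x`, and `λ > 0`, the functions `f_{x,λ} = (S*D_wS+λI)⁻¹S*D_w S f*` and
`f_λ = (L_K+λI)⁻¹L_K f*` satisfy
`‖f_{x,λ} − f_λ‖_{L^∞(X)} ≤ (C/λ) κ ‖f* − f_λ‖_K · h_x · ρ(X)`,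
where `C` is a Lipschitz bound for the maps `y ↦ u(y)K(·,y)`, `u ∈ H_K`. -/
theorem integration_error_estimate {X : Type*}
    [MetricSpace X] [CompactSpace X] [MeasurableSpace X] [BorelSpace X]
    (ρ : Measure X) [IsFiniteMeasure ρ] [ρ.IsOpenPosMeasure]
    {H : Type*} [NormedAddCommGroup H] [InnerProductSpace ℝ H] [CompleteSpace H]
    (toFun : H → X → ℝ) (k : X → H) (K : X → X → ℝ) (κ : ℝ)
    (hK : ∀ x y : X, K x y = ⟪k x, k y⟫)
    (hrepro : ∀ (f : H) (x : X), ⟪k x, f⟫ = toFun f x)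
    (hκ : ∀ x : X, K x x ≤ κ ^ 2) (hκ0 : 0 ≤ κ)
    (hcont : ∀ u : H, Continuous (toFun u))
    {m : ℕ} (xp : Fin m → X) (hxp : Function.Injective xp)
    -- Voronoi cells, their weights, and strong continuity of `ρ` across cell boundaries
    (V : Fin m → Set X)
    (hV : ∀ i, V i = {y : X | ∀ j, j ≠ i → dist (xp i) y < dist (xp j) y})
    (hbd : ρ (Set.univ \ ⋃ i, V i) = 0)
    (w : Fin m → ℝ) (hw : ∀ i, w i = (ρ (V i)).toReal)
    -- fill distance
    (h : ℝ) (hh0 : 0 ≤ h) (hfill : ∀ y : X, ∃ i, dist (xp i) y ≤ h)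
    -- Lipschitz bound for `y ↦ u(y) K(·,y)`
    (C0 : ℝ) (hC0 : 0 ≤ C0)
    (hLip : ∀ u : H, LipschitzWith (Real.toNNReal (C0 * ‖u‖))
      (fun y : X => toFun u y • k y))
    (lam : ℝ) (hlam : 0 < lam)
    (fstar : H)
    -- the sampling operator, the weight operator, and `(S*D_wS + λI)⁻¹`
    (S : H →L[ℝ] EuclideanSpace ℝ (Fin m))
    (hS : ∀ (f : H) (i : Fin m), S f i = toFun f (xp i))
    (Dw : EuclideanSpace ℝ (Fin m) →L[ℝ] EuclideanSpace ℝ (Fin m))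
    (hDw : ∀ (c : EuclideanSpace ℝ (Fin m)) (i : Fin m), Dw c i = w i * c i)
    (B : H →L[ℝ] H)
    (hB₁ : (((ContinuousLinearMap.adjoint S).comp (Dw.comp S)) +
        lam • ContinuousLinearMap.id ℝ H).comp B = ContinuousLinearMap.id ℝ H)
    (hB₂ : B.comp (((ContinuousLinearMap.adjoint S).comp (Dw.comp S)) +
        lam • ContinuousLinearMap.id ℝ H) = ContinuousLinearMap.id ℝ H)
    -- `f_λ = (L_K + λI)⁻¹ L_K f*`
    (flam : H)
    (hflam : ∀ t : X, lam * toFun flam t + (∫ y, K t y * toFun flam y ∂ρ) =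
      ∫ y, K t y * toFun fstar y ∂ρ) :
    ∀ t : X,
      |toFun (B ((ContinuousLinearMap.adjoint S) (Dw (S fstar)))) t - toFun flam t| ≤
        (C0 / lam) * κ * ‖fstar - flam‖ * h * (ρ Set.univ).toReal :=
  integration_error_estimate_general ρ toFun k K κ hK hrepro hκ hκ0 hcont xp V hV hbd w hw h hfill
    C0 hC0 hLip lam hlam fstar S hS Dw hDw B hB₁ hB₂ flam hflam
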